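/- Suppose there is a basis (e_1, …, e_m) of ℝ^m such that for every t ∈ {1, …, m} there exists an m×d matrix X^{(t)} with p(X^{(t)}) > 0, rank(X^{(t)}) = d, and X^{(t)ᵀ} ·ᵥ e_t = 0. Then the matrix ℳ := ∫ M(X) dν(X) is invertible. (Invertibility of the conditional expectation matrix ℳ(V) under the high-level support condition.) -/

import Mathlib

/-!
Every `M(X)` is symmetric and idempotent, so `vᵀ ℳ v = ∫ ‖M(X) v‖² dν(X) ≥ 0` and `ℳ` is
positive semidefinite. For `v ≠ 0` pick `t` with `⟪e_t, v⟫ ≠ 0`; since `X⁽ᵗ⁾ᵀ e_t = 0`,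
`M(X⁽ᵗ⁾)` fixes `e_t`, hence `M(X⁽ᵗ⁾) v ≠ 0`. Full column rank makes `X ↦ vᵀ M(X) v`
continuous near `X⁽ᵗ⁾`, and `p(X⁽ᵗ⁾) > 0`, so the integrand is positive on an open set of
positive `ν`-measure. Thus `ℳ` is positive definite, in particular invertible.
-/

open MeasureTheory Matrix

namespace Matrix

variable {m n K : Type*} [Fintype m] [Fintype n] [DecidableEq n]

theorem isUnit_of_rank_eq_card [Field K] {A : Matrix n n K} (h : A.rank = Fintype.card n) :
    IsUnit A := by
  rw [← mulVec_surjective_iff_isUnit, ← coe_mulVecLin, ← LinearMap.range_eq_top]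
  apply Submodule.eq_top_of_finrank_eq
  rwa [Module.finrank_fintype_fun_eq_card]

theorem isUnit_det_transpose_mul_self_of_rank_eq_card {X : Matrix m n ℝ}
    (h : X.rank = Fintype.card n) : IsUnit (Xᵀ * X).det :=
  (isUnit_iff_isUnit_det _).1 <| isUnit_of_rank_eq_card <| by rwa [rank_transpose_mul_self]

theorem abs_apply_le_one_of_transpose_eq_of_mul_self_eq {M : Matrix m m ℝ}
    (hsymm : Mᵀ = M) (hidem : M * M = M) (i j : m) : |M i j| ≤ 1 := by
  have hdiag : ∀ a, M a a = ∑ k, M a k * M a k := fun a => by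
    conv_lhs => rw [← hidem]
    simp only [mul_apply]
    exact Finset.sum_congr rfl fun k _ => by rw [← transpose_apply M k a, hsymm]
  have hij : M i j * M i j ≤ M i i := hdiag i ▸
    Finset.single_le_sum (f := fun k => M i k * M i k) (fun k _ => mul_self_nonneg _)
      (Finset.mem_univ j)
  have hii : M i i * M i i ≤ M i i := by
    conv_rhs => rw [hdiag i]
    exact Finset.single_le_sum (f := fun k => M i k * M i k) (fun k _ => mul_self_nonneg _)
      (Finset.mem_univ i)
  rw [abs_le_one_iff_mul_self_le_one]
  nlinarith

theorem dotProduct_mulVec_eq_of_transpose_eq_of_mul_self_eq {M : Matrix m m ℝ}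
    (hsymm : Mᵀ = M) (hidem : M * M = M) (v : m → ℝ) :
    v ⬝ᵥ (M *ᵥ v) = (M *ᵥ v) ⬝ᵥ (M *ᵥ v) := by
  conv_lhs => rw [← hidem, ← mulVec_mulVec, dotProduct_mulVec, ← hsymm, vecMul_transpose]
  rw [hsymm]

theorem isOpen_setOf_isUnit_det_transpose_mul_self :
    IsOpen {X : Matrix m n ℝ | IsUnit (Xᵀ * X).det} :=
  Units.isOpen.preimage (continuous_id.matrix_transpose.matrix_mul continuous_id).matrix_det

variable [DecidableEq m]

/-- The paper's `M(X)`; by the convention `A⁻¹ = 0` it is `1` when `XᵀX` is singular. -/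
noncomputable def residualMaker (X : Matrix m n ℝ) : Matrix m m ℝ :=
  1 - X * (Xᵀ * X)⁻¹ * Xᵀ

theorem residualMaker_transpose (X : Matrix m n ℝ) : (residualMaker X)ᵀ = residualMaker X := by
  rw [residualMaker, transpose_sub, transpose_one, transpose_mul, transpose_mul,
    transpose_transpose, transpose_nonsing_inv, transpose_mul, transpose_transpose,
    Matrix.mul_assoc]

theorem residualMaker_mul_self (X : Matrix m n ℝ) :
    residualMaker X * residualMaker X = residualMaker X := by
  by_cases h : IsUnit (Xᵀ * X).det
  · have hP : X * (Xᵀ * X)⁻¹ * Xᵀ * (X * (Xᵀ * X)⁻¹ * Xᵀ) = X * (Xᵀ * X)⁻¹ * Xᵀ := by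
      calc X * (Xᵀ * X)⁻¹ * Xᵀ * (X * (Xᵀ * X)⁻¹ * Xᵀ)
          = X * ((Xᵀ * X)⁻¹ * (Xᵀ * X)) * (Xᵀ * X)⁻¹ * Xᵀ := by simp only [Matrix.mul_assoc]
        _ = X * (Xᵀ * X)⁻¹ * Xᵀ := by rw [nonsing_inv_mul _ h, Matrix.mul_one]
    simp only [residualMaker, sub_mul, mul_sub, Matrix.one_mul, Matrix.mul_one, hP]
    abel
  · rw [residualMaker, nonsing_inv_apply_not_isUnit _ h, Matrix.mul_zero, Matrix.zero_mul,
      sub_zero, Matrix.one_mul]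

theorem residualMaker_of_not_isUnit {X : Matrix m n ℝ} (h : ¬IsUnit (Xᵀ * X).det) :
    residualMaker X = 1 := by
  rw [residualMaker, nonsing_inv_apply_not_isUnit _ h, Matrix.mul_zero, Matrix.zero_mul, sub_zero]

theorem residualMaker_mulVec_of_transpose_mulVec_eq_zero {X : Matrix m n ℝ} {w : m → ℝ}
    (hw : Xᵀ *ᵥ w = 0) : residualMaker X *ᵥ w = w := by
  rw [residualMaker, sub_mulVec, one_mulVec, ← mulVec_mulVec, hw, mulVec_zero, sub_zero]

theorem dotProduct_residualMaker_mulVec_pos {X : Matrix m n ℝ} {v w : m → ℝ}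
    (hw : Xᵀ *ᵥ w = 0) (hwv : w ⬝ᵥ v ≠ 0) : 0 < v ⬝ᵥ (residualMaker X *ᵥ v) := by
  have hsymm := residualMaker_transpose X
  rw [dotProduct_mulVec_eq_of_transpose_eq_of_mul_self_eq hsymm (residualMaker_mul_self X)]
  have hRv : residualMaker X *ᵥ v ≠ 0 := fun hRv => hwv <| by
    rw [← residualMaker_mulVec_of_transpose_mulVec_eq_zero hw, ← hsymm, mulVec_transpose,
      ← dotProduct_mulVec, hRv, dotProduct_zero]
  simpa only [star_trivial] using dotProduct_self_star_pos_iff.2 hRv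

theorem continuousOn_residualMaker :
    ContinuousOn (residualMaker : Matrix m n ℝ → Matrix m m ℝ) {X | IsUnit (Xᵀ * X).det} := by
  intro X hX
  obtain ⟨u, hu⟩ := hX
  have hgram : Continuous fun Y : Matrix m n ℝ => Yᵀ * Y :=
    continuous_id.matrix_transpose.matrix_mul continuous_id
  have hinv : ContinuousAt (fun Y : Matrix m n ℝ => (Yᵀ * Y)⁻¹) X :=
    (continuousAt_matrix_inv _ (hu ▸ NormedRing.inverse_continuousAt u)).comp hgram.continuousAt
  have hformula : Continuous fun P : Matrix m n ℝ × Matrix n n ℝ => 1 - P.1 * P.2 * P.1ᵀ := by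
    fun_prop
  exact (hformula.continuousAt.comp (continuousAt_id.prodMk hinv)).continuousWithinAt

theorem dotProduct_residualMaker_mulVec_nonneg (X : Matrix m n ℝ) (v : m → ℝ) :
    0 ≤ v ⬝ᵥ (residualMaker X *ᵥ v) := by
  rw [dotProduct_mulVec_eq_of_transpose_eq_of_mul_self_eq (residualMaker_transpose X)
    (residualMaker_mul_self X)]
  simpa only [star_trivial] using dotProduct_self_star_nonneg (residualMaker X *ᵥ v)

theorem measurable_comp_residualMaker {β : Type*} [TopologicalSpace β] [MeasurableSpace β]
    [BorelSpace β] {g : Matrix m m ℝ → β} (hg : Continuous g) :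
    Measurable fun X : m → n → ℝ => g (residualMaker (of X)) := by
  classical
  -- continuous on the open set where `XᵀX` is invertible, and the constant `1` off it
  set S : Set (m → n → ℝ) := {X | IsUnit ((of X)ᵀ * of X).det}
  have hcont : ContinuousOn (fun X : m → n → ℝ => g (residualMaker (of X))) S :=
    hg.comp_continuousOn continuousOn_residualMaker
  have hS : IsOpen S := isOpen_setOf_isUnit_det_transpose_mul_self
  convert hcont.measurable_piecewise (continuousOn_const (c := g 1)) hS.measurableSet using 1
  funext X
  by_cases hX : X ∈ S
  · simp [hX]
  · simp [hX, residualMaker_of_not_isUnit hX]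

theorem integrable_residualMaker_apply (μ : Measure (m → n → ℝ)) [IsFiniteMeasure μ] (i j : m) :
    Integrable (fun X => residualMaker (of X) i j) μ :=
  .of_bound (measurable_comp_residualMaker (continuous_apply_apply i j)).aestronglyMeasurable 1 <|
    .of_forall fun _ => abs_apply_le_one_of_transpose_eq_of_mul_self_eq
      (residualMaker_transpose _) (residualMaker_mul_self _) i j

end Matrix

theorem Module.Basis.exists_dotProduct_ne_zero {ι n K : Type*} [Fintype n] [Field K]
    [LinearOrder K] [IsStrictOrderedRing K] (e : Module.Basis ι K (n → K)) {v : n → K}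
    (hv : v ≠ 0) :
    ∃ i, e i ⬝ᵥ v ≠ 0 := by
  by_contra! h
  have hdot : (dotProductBilin K K).flip v = 0 := e.ext fun i => by simpa using h i
  exact hv (dotProduct_self_eq_zero.1 (LinearMap.congr_fun hdot v))

theorem integral_withDensity_pos_of_continuousOn {E : Type*} [TopologicalSpace E]
    [MeasurableSpace E] [OpensMeasurableSpace E] {μ : Measure E} [μ.IsOpenPosMeasure]
    {p f : E → ℝ} (hp : Continuous p) {U : Set E} (hU : IsOpen U) (hf : ContinuousOn f U)
    (hf_nonneg : 0 ≤ f) (hf_int : Integrable f (μ.withDensity fun x => ENNReal.ofReal (p x)))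
    {x₀ : E} (hx₀ : x₀ ∈ U) (hpx₀ : 0 < p x₀) (hfx₀ : 0 < f x₀) :
    0 < ∫ x, f x ∂μ.withDensity fun x => ENNReal.ofReal (p x) := by
  rw [integral_pos_iff_support_of_nonneg hf_nonneg hf_int]
  set W := (U ∩ {x | 0 < p x}) ∩ f ⁻¹' Set.Ioi 0
  have hW : IsOpen W :=
    (hf.mono Set.inter_subset_left).isOpen_inter_preimage (hU.inter (isOpen_lt continuous_const hp))
      isOpen_Ioi
  have hWsupp : W ⊆ Function.support f := fun x hx => hx.2.ne'
  have hWdens : {x | ENNReal.ofReal (p x) ≠ 0} ∩ W = W :=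
    Set.inter_eq_right.2 fun x hx => (ENNReal.ofReal_pos.2 hx.1.2).ne'
  refine (pos_iff_ne_zero.2 fun hW0 => ?_).trans_le (measure_mono hWsupp)
  rw [withDensity_apply_eq_zero hp.measurable.ennreal_ofReal, hWdens] at hW0
  exact (hW.measure_pos μ ⟨x₀, ⟨hx₀, hpx₀⟩, hfx₀⟩).ne' hW0

namespace Matrix

variable {α m : Type*} [MeasurableSpace α] {μ : Measure α} [Fintype m]

noncomputable def entrywiseIntegral {n : Type*} (F : α → Matrix m n ℝ) (μ : Measure α) :
    Matrix m n ℝ :=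
  of fun i j => ∫ x, F x i j ∂μ

variable {F : α → Matrix m m ℝ}

theorem integrable_dotProduct_mulVec (hF : ∀ i j, Integrable (fun x => F x i j) μ)
    (v w : m → ℝ) : Integrable (fun x => v ⬝ᵥ (F x *ᵥ w)) μ :=
  integrable_finsetSum _ fun i _ =>
    (integrable_finsetSum _ fun j _ => (hF i j).mul_const (w j)).const_mul (v i)

theorem integral_dotProduct_mulVec (hF : ∀ i j, Integrable (fun x => F x i j) μ)
    (v w : m → ℝ) :
    ∫ x, v ⬝ᵥ (F x *ᵥ w) ∂μ = v ⬝ᵥ (entrywiseIntegral F μ *ᵥ w) := by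
  simp only [dotProduct, mulVec, entrywiseIntegral, of_apply]
  rw [integral_finsetSum _ fun i _ =>
    (integrable_finsetSum _ fun j _ => (hF i j).mul_const (w j)).const_mul (v i)]
  refine Finset.sum_congr rfl fun i _ => ?_
  rw [integral_const_mul, integral_finsetSum _ fun j _ => (hF i j).mul_const (w j)]
  simp only [integral_mul_const]

theorem posDef_entrywiseIntegral (hF : ∀ i j, Integrable (fun x => F x i j) μ)
    (hsymm : ∀ x, (F x)ᵀ = F x) (hpos : ∀ v : m → ℝ, v ≠ 0 → 0 < ∫ x, v ⬝ᵥ (F x *ᵥ v) ∂μ) :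
    (entrywiseIntegral F μ).PosDef := by
  refine posDef_iff_dotProduct_mulVec.2 ⟨?_, fun v hv => ?_⟩
  · ext i j
    simp only [conjTranspose_apply, star_trivial, entrywiseIntegral, of_apply]
    exact integral_congr_ae (.of_forall fun x => congrFun (congrFun (hsymm x) i) j)
  · rw [star_trivial, ← integral_dotProduct_mulVec hF]
    exact hpos v hv

end Matrix

theorem integral_projection_matrix_invertible_of_support_condition_general
    (m d : ℕ)
    (p : (Fin m → Fin d → ℝ) → ℝ) (hp_cont : Continuous p)
    (ν : Measure (Fin m → Fin d → ℝ))
    (hν : ν = volume.withDensity fun X => ENNReal.ofReal (p X))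
    (hνprob : IsProbabilityMeasure ν)
    (e : Module.Basis (Fin m) ℝ (Fin m → ℝ))
    (he : ∀ t : Fin m, ∃ X : Fin m → Fin d → ℝ,
      0 < p X ∧ (Matrix.of X).rank = d ∧ (Matrix.of X)ᵀ *ᵥ e t = 0) :
    IsUnit (Matrix.of fun i j =>
      ∫ X, ((1 : Matrix (Fin m) (Fin m) ℝ)
        - Matrix.of X * ((Matrix.of X)ᵀ * Matrix.of X)⁻¹ * (Matrix.of X)ᵀ) i j ∂ν) := by
  change IsUnit (entrywiseIntegral (fun X => residualMaker (of X)) ν)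
  have hint : ∀ i j, Integrable (fun X => residualMaker (of X) i j) ν :=
    integrable_residualMaker_apply ν
  refine (posDef_entrywiseIntegral hint (fun X => residualMaker_transpose _) fun v hv => ?_).isUnit
  obtain ⟨t, ht⟩ := e.exists_dotProduct_ne_zero hv
  obtain ⟨X₀, hpX₀, hrank, horth⟩ := he t
  have hquad : ContinuousOn (fun X : Fin m → Fin d → ℝ => v ⬝ᵥ (residualMaker (of X) *ᵥ v))
      {X | IsUnit ((of X)ᵀ * of X).det} :=
    (continuous_const.dotProduct (continuous_id.matrix_mulVec continuous_const)).comp_continuousOn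
      continuousOn_residualMaker
  subst hν
  exact integral_withDensity_pos_of_continuousOn hp_cont
    isOpen_setOf_isUnit_det_transpose_mul_self hquad
    (fun X => dotProduct_residualMaker_mulVec_nonneg (of X) v)
    (integrable_dotProduct_mulVec hint v v)
    (isUnit_det_transpose_mul_self_of_rank_eq_card (X := of X₀) (by simpa using hrank)) hpX₀
    (dotProduct_residualMaker_mulVec_pos horth ht)

/-- Invertibility of the conditional expectation matrix `ℳ(V) = ∫ M(X) dν(X)` under the
high-level support condition (Result 2 / Assumption 4 of the paper): `ν` has a continuous
density `p` with respect to Lebesgue measure, and there is a basis `(e_t)` of `ℝ^m` such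
that for every `t` some matrix `X⁽ᵗ⁾` with `p(X⁽ᵗ⁾) > 0` has full column rank and columns
orthogonal to `e_t`. -/
theorem integral_projection_matrix_invertible_of_support_condition
    (m d : ℕ) (hd : 0 < d) (hdm : d < m)
    (p : (Fin m → Fin d → ℝ) → ℝ) (hp_cont : Continuous p) (hp_nonneg : ∀ X, 0 ≤ p X)
    (ν : Measure (Fin m → Fin d → ℝ))
    (hν : ν = volume.withDensity fun X => ENNReal.ofReal (p X))
    (hνprob : IsProbabilityMeasure ν)
    (e : Module.Basis (Fin m) ℝ (Fin m → ℝ))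
    (he : ∀ t : Fin m, ∃ X : Fin m → Fin d → ℝ,
      0 < p X ∧ (Matrix.of X).rank = d ∧ (Matrix.of X)ᵀ *ᵥ e t = 0) :
    IsUnit (Matrix.of fun i j =>
      ∫ X, ((1 : Matrix (Fin m) (Fin m) ℝ)
        - Matrix.of X * ((Matrix.of X)ᵀ * Matrix.of X)⁻¹ * (Matrix.of X)ᵀ) i j ∂ν) :=
  integral_projection_matrix_invertible_of_support_condition_general m d p hp_cont ν hν hνprob e he
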